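/- Let G be a finite simple graph on a vertex type V, let v ∈ V, and let G' be the graph obtained from G by copying the vertex v: G' has vertex set V ⊕ Unit, where vertices coming from V are adjacent in G' iff they are adjacent in G, and the new vertex ⋆ is adjacent in G' exactly to the neighbors of v in G (and is not adjacent to v). If G is ħ-perfect, then G' is ħ-perfect. -/

import Mathlib

open Matrix

/-- A realization of the graph `G` in dimension `d`: a family of Hermitian involutions that
anticommute on edges and commute on non-edges. -/
def IsRealization {V : Type*} (G : SimpleGraph V) (d : ℕ)
    (S : V → Matrix (Fin d) (Fin d) ℂ) : Prop :=
  (∀ i, (S i).IsHermitian) ∧ (∀ i, S i * S i = 1) ∧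
    (∀ i j, G.Adj i j → S i * S j = -(S j * S i)) ∧
    (∀ i j, i ≠ j → ¬G.Adj i j → S i * S j = S j * S i)

/-- The (real) expectation value `ψᴴ A ψ` of a matrix `A` at a vector `ψ`. -/
noncomputable def expectation {d : ℕ} (A : Matrix (Fin d) (Fin d) ℂ) (ψ : Fin d → ℂ) : ℝ :=
  (star ψ ⬝ᵥ (A *ᵥ ψ)).re

/-- The beta value of a realization: supremum over unit vectors of the weighted sum of squared
expectations. -/
noncomputable def betaVal {V : Type*} [Fintype V] {d : ℕ}
    (S : V → Matrix (Fin d) (Fin d) ℂ) (w : V → ℝ) : ℝ :=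
  sSup {r : ℝ | ∃ ψ : Fin d → ℂ, star ψ ⬝ᵥ ψ = 1 ∧
    r = ∑ i, w i * (expectation (S i) ψ) ^ 2}

/-- A finite set of vertices is independent if no two of its members are adjacent. -/
def IsIndepSet {V : Type*} (G : SimpleGraph V) (I : Finset V) : Prop :=
  ∀ a ∈ I, ∀ b ∈ I, ¬G.Adj a b

/-- The weighted independence number. -/
noncomputable def alphaW {V : Type*} [Fintype V] (G : SimpleGraph V) (w : V → ℝ) : ℝ :=
  sSup {r : ℝ | ∃ I : Finset V, IsIndepSet G I ∧ r = ∑ i ∈ I, w i}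

/-- A graph is ħ-perfect if for every realization and every nonnegative weight vector the beta
value equals the weighted independence number. -/
def HbarPerfect {V : Type*} [Fintype V] (G : SimpleGraph V) : Prop :=
  ∀ d : ℕ, 1 ≤ d → ∀ S : V → Matrix (Fin d) (Fin d) ℂ, IsRealization G d S →
    ∀ w : V → ℝ, (∀ i, 0 ≤ w i) → betaVal S w = alphaW G w

/-!
The copied graph is the pullback `G.comap f` of `G` along the surjection `f : V ⊕ Unit → V`
sending the new vertex to `v`, and the argument works for any surjection. Restricting a
realization `S` of `G.comap f` along a section `g` of `f` gives a realization of `G`, and the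
weighted independence number of `G.comap f` equals that of `G` with the weights summed over the
fibres. For a unit vector `ψ`, choosing `g` to pick in each fibre a vertex with the largest
`⟨S x⟩_ψ²` bounds the objective for `S` by the objective for `S ∘ g`, hence by `α`. The reverse
inequality `α ≤ β` holds for every realization: on an independent set the involutions commute,
so they have a common `±1`-eigenvector.
-/

open Finset ComplexOrder

section Expectation

variable {d : ℕ}

theorem expectation_neg (A : Matrix (Fin d) (Fin d) ℂ) (ψ : Fin d → ℂ) :
    expectation (-A) ψ = -expectation A ψ := by
  simp [expectation, neg_mulVec]

theorem expectation_le_one {A : Matrix (Fin d) (Fin d) ℂ} (hA : A.IsHermitian) (hA2 : A * A = 1)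
    {ψ : Fin d → ℂ} (hψ : star ψ ⬝ᵥ ψ = 1) : expectation A ψ ≤ 1 := by
  -- `‖(1 - A) ψ‖² = 2 (1 - ⟨A⟩_ψ)`
  have hsq : (1 - A)ᴴ * (1 - A) = (2 : ℝ) • (1 - A) := by
    simp only [conjTranspose_sub, conjTranspose_one, hA.eq, sub_mul, mul_sub, hA2, mul_one,
      one_mul, two_smul]
    abel
  have h := dotProduct_star_self_nonneg ((1 - A) *ᵥ ψ)
  rw [star_mulVec, ← dotProduct_mulVec, mulVec_mulVec, hsq, smul_mulVec, sub_mulVec,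
    one_mulVec, dotProduct_smul, dotProduct_sub, hψ] at h
  have h' := (Complex.nonneg_iff.1 h).1
  rw [Complex.smul_re, Complex.sub_re, Complex.one_re, smul_eq_mul] at h'
  unfold expectation
  linarith

theorem sq_expectation_le_one {A : Matrix (Fin d) (Fin d) ℂ} (hA : A.IsHermitian) (hA2 : A * A = 1)
    {ψ : Fin d → ℂ} (hψ : star ψ ⬝ᵥ ψ = 1) : expectation A ψ ^ 2 ≤ 1 := by
  have hneg := expectation_le_one hA.neg (by rw [neg_mul_neg, hA2]) hψ
  rw [expectation_neg] at hneg
  nlinarith [expectation_le_one hA hA2 hψ]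

theorem sq_expectation_eq_one {A : Matrix (Fin d) (Fin d) ℂ} {ψ : Fin d → ℂ}
    (hψ : star ψ ⬝ᵥ ψ = 1) (h : A *ᵥ ψ = ψ ∨ A *ᵥ ψ = -ψ) : expectation A ψ ^ 2 = 1 := by
  rcases h with h | h <;> simp [expectation, h, hψ]

theorem exists_smul_unit {ψ : Fin d → ℂ} (hψ : ψ ≠ 0) :
    ∃ c : ℂ, star (c • ψ) ⬝ᵥ (c • ψ) = 1 := by
  obtain ⟨r, hr, hrψ⟩ : ∃ r : ℝ, 0 < r ∧ star ψ ⬝ᵥ ψ = r := by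
    have h := dotProduct_star_self_pos_iff.2 hψ
    exact ⟨_, Complex.pos_iff.1 h |>.1, (Complex.ext rfl (Complex.pos_iff.1 h).2.symm)⟩
  refine ⟨((√r)⁻¹ : ℝ), ?_⟩
  rw [star_smul, smul_dotProduct, dotProduct_smul, hrψ, Complex.star_def, Complex.conj_ofReal]
  simp only [smul_eq_mul, ← Complex.ofReal_mul]
  rw [← mul_assoc, ← mul_inv, Real.mul_self_sqrt hr.le, inv_mul_cancel₀ hr.ne', Complex.ofReal_one]

theorem exists_unit_vector (hd : 1 ≤ d) : ∃ ψ : Fin d → ℂ, star ψ ⬝ᵥ ψ = 1 :=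
  ⟨Pi.single ⟨0, hd⟩ 1, by simp⟩

end Expectation

theorem Matrix.exists_common_eigvec_of_commute {n R ι : Type*} [Fintype n] [DecidableEq n]
    [Nonempty n] [Ring R] [Nontrivial R] (S : ι → Matrix n n R) (I : Finset ι)
    (hinv : ∀ x ∈ I, S x * S x = 1)
    (hcomm : ∀ x ∈ I, ∀ y ∈ I, Commute (S x) (S y)) :
    ∃ ψ : n → R, ψ ≠ 0 ∧ ∀ x ∈ I, S x *ᵥ ψ = ψ ∨ S x *ᵥ ψ = -ψ := by
  classical
  induction I using Finset.induction_on with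
  | empty => exact ⟨fun _ => 1, fun h => one_ne_zero (congrFun h (Classical.arbitrary n)), by simp⟩
  | @insert j I hj ih =>
    obtain ⟨ψ, hψ0, hψ⟩ := ih (fun x hx => hinv x (mem_insert_of_mem hx))
      (fun x hx y hy => hcomm x (mem_insert_of_mem hx) y (mem_insert_of_mem hy))
    by_cases hneg : S j *ᵥ ψ = -ψ
    · exact ⟨ψ, hψ0, forall_mem_insert _ _ _ |>.2 ⟨Or.inr hneg, hψ⟩⟩
    -- Otherwise `ψ + S j ψ` is a nonzero `+1`-eigenvector of `S j`, still one of each `S x`.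
    refine ⟨ψ + S j *ᵥ ψ, fun h => hneg (eq_neg_of_add_eq_zero_right h), ?_⟩
    refine forall_mem_insert _ _ _ |>.2 ⟨Or.inl ?_, fun x hx => ?_⟩
    · rw [mulVec_add, mulVec_mulVec, hinv j (mem_insert_self j I), one_mulVec, add_comm]
    · have hc : S x *ᵥ (S j *ᵥ ψ) = S j *ᵥ (S x *ᵥ ψ) := by
        rw [mulVec_mulVec, mulVec_mulVec,
          (hcomm x (mem_insert_of_mem hx) j (mem_insert_self j I)).eq]
      rcases hψ x hx with h | h
      · left; rw [mulVec_add, hc, h]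
      · right; rw [mulVec_add, hc, h, mulVec_neg, neg_add]

section Realization

variable {V W : Type*} {G : SimpleGraph V} {d : ℕ}

theorem IsRealization.comp_leftInverse {f : W → V} {g : V → W} (hfg : Function.LeftInverse f g)
    {S : W → Matrix (Fin d) (Fin d) ℂ} (hS : IsRealization (G.comap f) d S) :
    IsRealization G d (S ∘ g) := by
  obtain ⟨hherm, hinv, hanti, hcomm⟩ := hS
  refine ⟨fun i => hherm (g i), fun i => hinv (g i), fun i j hij => hanti _ _ ?_,
    fun i j hne hij => hcomm _ _ (hfg.injective.ne hne) ?_⟩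
  · simpa [hfg i, hfg j] using hij
  · simpa [hfg i, hfg j] using hij

theorem IsRealization.exists_unit_common_eigvec {S : V → Matrix (Fin d) (Fin d) ℂ}
    (hS : IsRealization G d S) (hd : 1 ≤ d) {I : Finset V} (hI : IsIndepSet G I) :
    ∃ ψ : Fin d → ℂ, star ψ ⬝ᵥ ψ = 1 ∧ ∀ x ∈ I, S x *ᵥ ψ = ψ ∨ S x *ᵥ ψ = -ψ := by
  have : Nonempty (Fin d) := ⟨⟨0, hd⟩⟩
  obtain ⟨ψ, hψ0, hψ⟩ := exists_common_eigvec_of_commute S I (fun x _ => hS.2.1 x)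
    fun x hx y hy => by
      by_cases hxy : x = y
      · rw [hxy]
      · exact hS.2.2.2 x y hxy (hI x hx y hy)
  obtain ⟨c, hc⟩ := exists_smul_unit hψ0
  refine ⟨c • ψ, hc, fun x hx => ?_⟩
  rcases hψ x hx with h | h
  · left; rw [mulVec_smul, h]
  · right; rw [mulVec_smul, h, smul_neg]

variable [Fintype V]

theorem IsRealization.le_betaVal {S : V → Matrix (Fin d) (Fin d) ℂ} (hS : IsRealization G d S)
    {w : V → ℝ} (hw : ∀ i, 0 ≤ w i) {ψ : Fin d → ℂ} (hψ : star ψ ⬝ᵥ ψ = 1) :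
    ∑ i, w i * expectation (S i) ψ ^ 2 ≤ betaVal S w := by
  refine le_csSup ⟨∑ i, w i, ?_⟩ ⟨ψ, hψ, rfl⟩
  rintro r ⟨φ, hφ, rfl⟩
  exact sum_le_sum fun i _ =>
    mul_le_of_le_one_right (hw i) (sq_expectation_le_one (hS.1 i) (hS.2.1 i) hφ)

theorem betaVal_le {S : V → Matrix (Fin d) (Fin d) ℂ} {w : V → ℝ} {c : ℝ} (hd : 1 ≤ d)
    (h : ∀ ψ : Fin d → ℂ, star ψ ⬝ᵥ ψ = 1 → ∑ i, w i * expectation (S i) ψ ^ 2 ≤ c) :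
    betaVal S w ≤ c := by
  obtain ⟨ψ, hψ⟩ := exists_unit_vector hd
  refine csSup_le ⟨_, ψ, hψ, rfl⟩ ?_
  rintro r ⟨φ, hφ, rfl⟩
  exact h φ hφ

theorem le_alphaW {w : V → ℝ} (hw : ∀ i, 0 ≤ w i) {I : Finset V} (hI : IsIndepSet G I) :
    ∑ i ∈ I, w i ≤ alphaW G w := by
  refine le_csSup ⟨∑ i, w i, ?_⟩ ⟨I, hI, rfl⟩
  rintro r ⟨J, -, rfl⟩
  exact sum_le_sum_of_subset_of_nonneg (subset_univ J) fun i _ _ => hw i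

theorem alphaW_le {w : V → ℝ} {c : ℝ} (h : ∀ I : Finset V, IsIndepSet G I → ∑ i ∈ I, w i ≤ c) :
    alphaW G w ≤ c := by
  refine csSup_le ⟨0, ∅, fun a ha => absurd ha (notMem_empty a), rfl⟩ ?_
  rintro r ⟨I, hI, rfl⟩
  exact h I hI

theorem IsRealization.alphaW_le_betaVal {S : V → Matrix (Fin d) (Fin d) ℂ}
    (hS : IsRealization G d S) (hd : 1 ≤ d) {w : V → ℝ} (hw : ∀ i, 0 ≤ w i) :
    alphaW G w ≤ betaVal S w := by
  refine alphaW_le fun I hI => ?_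
  obtain ⟨ψ, hψ, hev⟩ := hS.exists_unit_common_eigvec hd hI
  calc ∑ i ∈ I, w i = ∑ i ∈ I, w i * expectation (S i) ψ ^ 2 :=
        sum_congr rfl fun i hi => by rw [sq_expectation_eq_one hψ (hev i hi), mul_one]
    _ ≤ ∑ i, w i * expectation (S i) ψ ^ 2 :=
        sum_le_sum_of_subset_of_nonneg (subset_univ I) fun i _ _ => by
          have := hw i; positivity
    _ ≤ betaVal S w := hS.le_betaVal hw hψ

end Realization

section Comap

variable {V W : Type*} [Fintype W] [DecidableEq V]

def fiberSum (f : W → V) (w : W → ℝ) (i : V) : ℝ :=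
  ∑ x with f x = i, w x

theorem fiberSum_nonneg {f : W → V} {w : W → ℝ} (hw : ∀ x, 0 ≤ w x) (i : V) :
    0 ≤ fiberSum f w i :=
  sum_nonneg fun x _ => hw x

theorem alphaW_comap [Fintype V] (G : SimpleGraph V) (f : W → V) {w : W → ℝ}
    (hw : ∀ x, 0 ≤ w x) :
    alphaW (G.comap f) w = alphaW G (fiberSum f w) := by
  apply le_antisymm
  · refine alphaW_le fun I hI => ?_
    have hfI : IsIndepSet G (I.image f) := by
      simp only [IsIndepSet, forall_mem_image]
      exact hI
    calc ∑ x ∈ I, w x ≤ ∑ x with f x ∈ I.image f, w x :=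
          sum_le_sum_of_subset_of_nonneg
            (fun x hx => mem_filter.2 ⟨mem_univ x, mem_image_of_mem f hx⟩) fun x _ _ => hw x
      _ = ∑ i ∈ I.image f, fiberSum f w i := (sum_fiberwise_eq_sum_filter _ _ _ _).symm
      _ ≤ alphaW G (fiberSum f w) := le_alphaW (fiberSum_nonneg hw) hfI
  · refine alphaW_le fun I hI => ?_
    have hfI : IsIndepSet (G.comap f) {x | f x ∈ I} := fun x hx y hy =>
      hI _ (mem_filter.1 hx).2 _ (mem_filter.1 hy).2
    calc ∑ i ∈ I, fiberSum f w i = ∑ x with f x ∈ I, w x := sum_fiberwise_eq_sum_filter _ _ _ _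
      _ ≤ alphaW (G.comap f) w := le_alphaW hw hfI

theorem exists_leftInverse_sum_le [Fintype V] {f : W → V} (hf : Function.Surjective f)
    {w : W → ℝ} (hw : ∀ x, 0 ≤ w x) (e : W → ℝ) :
    ∃ g : V → W, Function.LeftInverse f g ∧ ∑ x, w x * e x ≤ ∑ i, fiberSum f w i * e (g i) := by
  have hmax (i : V) : ∃ x ∈ ({x | f x = i} : Finset W), ∀ y ∈ ({x | f x = i} : Finset W),
      e y ≤ e x :=
    exists_max_image _ e ⟨(hf i).choose, by simpa using (hf i).choose_spec⟩
  choose g hg hmax using hmax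
  refine ⟨g, fun i => (mem_filter.1 (hg i)).2, ?_⟩
  calc ∑ x, w x * e x = ∑ i, ∑ x with f x = i, w x * e x := (sum_fiberwise _ _ _).symm
    _ ≤ ∑ i, ∑ x with f x = i, w x * e (g i) :=
        sum_le_sum fun i _ => sum_le_sum fun x hx =>
          mul_le_mul_of_nonneg_left (hmax i x hx) (hw x)
    _ = ∑ i, fiberSum f w i * e (g i) := by simp only [fiberSum, sum_mul]

end Comap

theorem HbarPerfect.comap {V W : Type*} [Fintype V] [Fintype W] {G : SimpleGraph V}
    (hG : HbarPerfect G) {f : W → V} (hf : Function.Surjective f) : HbarPerfect (G.comap f) := by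
  classical
  intro d hd S hS w hw
  refine le_antisymm (betaVal_le hd fun ψ hψ => ?_) (hS.alphaW_le_betaVal hd hw)
  obtain ⟨g, hfg, hle⟩ := exists_leftInverse_sum_le hf hw fun x => expectation (S x) ψ ^ 2
  have hSg := hS.comp_leftInverse hfg
  calc ∑ x, w x * expectation (S x) ψ ^ 2
      ≤ ∑ i, fiberSum f w i * expectation ((S ∘ g) i) ψ ^ 2 := hle
    _ ≤ betaVal (S ∘ g) (fiberSum f w) := hSg.le_betaVal (fiberSum_nonneg hw) hψ
    _ = alphaW (G.comap f) w := by
        rw [hG d hd _ hSg _ (fiberSum_nonneg hw), alphaW_comap G f hw]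

theorem eq_comap_sumElim_of_copy {V : Type*} (G : SimpleGraph V) (v : V)
    (G' : SimpleGraph (V ⊕ Unit))
    (hll : ∀ a b, G'.Adj (Sum.inl a) (Sum.inl b) ↔ G.Adj a b)
    (hnew : ∀ a, G'.Adj (Sum.inl a) (Sum.inr ()) ↔ G.Adj a v) :
    G' = G.comap (Sum.elim id fun _ => v) := by
  ext x y
  rcases x with a | ⟨⟩ <;> rcases y with b | ⟨⟩
  · exact hll a b
  · exact hnew a
  · simpa [G'.adj_comm, G.adj_comm] using hnew b
  · simp

/-- Copying a vertex of an ħ-perfect graph yields an ħ-perfect graph: the new vertex is adjacent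
exactly to the neighbors of the copied vertex (and not to the copied vertex itself). -/
theorem stmt_7 {V : Type*} [Fintype V] (G : SimpleGraph V) (v : V)
    (G' : SimpleGraph (V ⊕ Unit))
    (hll : ∀ a b, G'.Adj (Sum.inl a) (Sum.inl b) ↔ G.Adj a b)
    (hnew : ∀ a, G'.Adj (Sum.inl a) (Sum.inr ()) ↔ G.Adj a v)
    (hG : HbarPerfect G) :
    HbarPerfect G' := by
  rw [eq_comap_sumElim_of_copy G v G' hll hnew]
  exact hG.comap fun i => ⟨Sum.inl i, rfl⟩
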